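/- arXiv:math/9802065 — 13 statements merged into one kernel-verified Lean document; each statement's English description precedes it below -/
import Mathlib

section
/- Any two distinct nontrivial coresets of a digraph are disjoint: if U and W are both minimal nonempty vertex sets satisfying β(α(U)) = U and β(α(W)) = W respectively, and U ≠ W, then U ∩ W = ∅. -/
variable {V : Type*}

/-- Successor set: vertices with a predecessor in `S`. -/
def succSet (E : V → V → Prop) (S : Set V) : Set V := {v | ∃ u ∈ S, E u v}

/-- Predecessor set: vertices with a successor in `S`. -/
def predSet (E : V → V → Prop) (S : Set V) : Set V := {u | ∃ v ∈ S, E u v}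

/-- A nontrivial coreset: a minimal nonempty set `U` with `β(α(U)) = U`. -/
def IsCoreset (E : V → V → Prop) (U : Set V) : Prop :=
  U.Nonempty ∧ predSet E (succSet E U) = U ∧
    ∀ U' ⊆ U, U'.Nonempty → predSet E (succSet E U') = U' → U' = U

/-- The set of all sinks (the trivial coreset). -/
def sinks (E : V → V → Prop) : Set V := {v | ∀ w, ¬ E v w}

/-- The set of all sources. -/
def sources (E : V → V → Prop) : Set V := {v | ∀ u, ¬ E u v}

/-- A coreset: the trivial coreset (all sinks) or a nontrivial coreset. -/
def IsCoresetGen (E : V → V → Prop) (U : Set V) : Prop :=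
  U = sinks E ∨ IsCoreset E U

/-- Distinct nontrivial coresets are disjoint. -/
theorem stmt1 {V : Type*} (E : V → V → Prop) (U W : Set V)
    (hU : IsCoreset E U) (hW : IsCoreset E W) (hne : U ≠ W) : U ∩ W = ∅ := by
  obtain ⟨-, hUfix, hUmin⟩ := hU
  obtain ⟨-, hWfix, hWmin⟩ := hW
  by_contra h
  have hS : (U ∩ W).Nonempty := Set.nonempty_iff_ne_empty.2 h
  have mono : ∀ S T : Set V, S ⊆ T → predSet E (succSet E S) ⊆ predSet E (succSet E T) := by
    intro S T hST u ⟨v, ⟨w, hw, hwv⟩, huv⟩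
    exact ⟨v, ⟨w, hST hw, hwv⟩, huv⟩
  have hsub : predSet E (succSet E (U ∩ W)) ⊆ U ∩ W := fun u hu =>
    ⟨hUfix ▸ mono _ U Set.inter_subset_left hu,
     hWfix ▸ mono _ W Set.inter_subset_right hu⟩
  have hsup : U ∩ W ⊆ predSet E (succSet E (U ∩ W)) := by
    intro u hu
    have : u ∈ predSet E (succSet E U) := hUfix.symm ▸ hu.1
    obtain ⟨v, -, huv⟩ := this
    exact ⟨v, ⟨u, hu, huv⟩, huv⟩
  have hfix : predSet E (succSet E (U ∩ W)) = U ∩ W := le_antisymm hsub hsup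
  have h1 := hUmin _ Set.inter_subset_left hS hfix
  have h2 := hWmin _ Set.inter_subset_right hS hfix
  exact hne (h1 ▸ h2)
end

section
/- If U and W are distinct coresets of a digraph, then no vertex of U and vertex of W have a common successor; equivalently α(U) ∩ α(W) = ∅. -/
variable {V : Type*}

lemma succSet_sinks_empty (E : V → V → Prop) : succSet E (sinks E) = ∅ := by
  ext v
  simp only [succSet, sinks, Set.mem_setOf_eq, Set.mem_empty_iff_false, iff_false]
  rintro ⟨u, hu, huv⟩
  exact hu v huv

lemma predSet_mono (E : V → V → Prop) {S T : Set V} (h : S ⊆ T) :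
    predSet E S ⊆ predSet E T := fun u ⟨v, hv, huv⟩ => ⟨v, h hv, huv⟩

/-- Key lemma: two nontrivial coresets with a common successor are equal. -/
lemma coreset_eq (E : V → V → Prop) {U W : Set V}
    (hU : IsCoreset E U) (hW : IsCoreset E W)
    (h : (succSet E U ∩ succSet E W).Nonempty) : U = W := by
  obtain ⟨_, hUc, hUm⟩ := hU
  obtain ⟨_, hWc, hWm⟩ := hW
  set A := succSet E U ∩ succSet E W with hA
  set U' := predSet E A with hU'
  have hU'U : U' ⊆ U := by
    rw [← hUc]; exact predSet_mono E Set.inter_subset_left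
  have hU'W : U' ⊆ W := by
    rw [← hWc]; exact predSet_mono E Set.inter_subset_right
  have hne : U'.Nonempty := by
    obtain ⟨v, hv⟩ := h
    obtain ⟨u, hu, huv⟩ := hv.1
    exact ⟨u, v, hv, huv⟩
  have hfix : predSet E (succSet E U') = U' := by
    apply Set.Subset.antisymm
    · have h1 : succSet E U' ⊆ A := by
        rintro v ⟨u, hu, huv⟩
        exact ⟨⟨u, hU'U hu, huv⟩, ⟨u, hU'W hu, huv⟩⟩
      exact predSet_mono E h1
    · rintro u ⟨v, hv, huv⟩
      exact ⟨v, ⟨u, ⟨v, hv, huv⟩, huv⟩, huv⟩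
  have e1 := hUm U' hU'U hne hfix
  have e2 := hWm U' hU'W hne hfix
  rw [← e1, ← e2]

/-- Vertices in distinct coresets have no common successor. -/
theorem stmt2 {V : Type*} (E : V → V → Prop) (U W : Set V)
    (hU : IsCoresetGen E U) (hW : IsCoresetGen E W) (hne : U ≠ W) :
    succSet E U ∩ succSet E W = ∅ := by
  rcases hU with rfl | hU
  · rw [succSet_sinks_empty, Set.empty_inter]
  rcases hW with rfl | hW
  · rw [succSet_sinks_empty, Set.inter_empty]
  by_contra h
  exact hne (coreset_eq E hU hW (Set.nonempty_iff_ne_empty.mpr h))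
end

section
/- Every vertex of a finite digraph belongs to some coreset: every sink belongs to the trivial coreset, and every non-sink vertex belongs to some minimal nonempty set U with β(α(U)) = U. -/
variable {V : Type*}

lemma predSucc_eq (E : V → V → Prop) (U : Set V) :
    predSet E (succSet E U) = {u | ∃ s ∈ U, ∃ x, E s x ∧ E u x} := by
  ext u
  simp only [predSet, succSet, Set.mem_setOf_eq]
  constructor
  · rintro ⟨x, ⟨s, hs, hsx⟩, hux⟩
    exact ⟨s, hs, x, hsx, hux⟩
  · rintro ⟨s, hs, x, hsx, hux⟩
    exact ⟨x, ⟨s, hs, hsx⟩, hux⟩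

/-- Every vertex of a finite digraph belongs to some coreset: sinks belong to the
trivial coreset, and every non-sink lies in some nontrivial coreset. -/
theorem stmt3 {V : Type*} [Finite V] (E : V → V → Prop) :
    (∀ v, (∀ w, ¬ E v w) → v ∈ sinks E) ∧
    (∀ v : V, (∃ w, E v w) → ∃ U, IsCoreset E U ∧ v ∈ U) := by
  constructor
  · intro v h; exact h
  · rintro v ⟨w, hw⟩
    set R : V → V → Prop := fun a b => ∃ x, E a x ∧ E b x with hRdef
    have hRsymm : ∀ {a b}, R a b → R b a := by
      rintro a b ⟨x, h1, h2⟩; exact ⟨x, h2, h1⟩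
    -- the component of v
    set C : Set V := {u | Relation.ReflTransGen R v u} with hCdef
    have hvC : v ∈ C := Relation.ReflTransGen.refl
    have hRvv : R v v := ⟨w, hw, hw⟩
    -- fixedness of any reachability class from a point with R u u... general lemma:
    have fix : ∀ u : V, R u u →
        predSet E (succSet E {x | Relation.ReflTransGen R u x})
          = {x | Relation.ReflTransGen R u x} := by
      intro u huu
      rw [predSucc_eq]
      ext x
      simp only [Set.mem_setOf_eq]
      constructor
      · rintro ⟨s, hs, hRsx⟩
        exact hs.tail hRsx
      · intro hx
        rcases hx.cases_tail with h | ⟨s, hus, hsx⟩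
        · exact ⟨u, Relation.ReflTransGen.refl, hRsymm (h ▸ huu)⟩
        · exact ⟨s, hus, hsx⟩
    -- if U' is a fixed point and u ∈ U', then the component of u is inside U'
    have comp_sub : ∀ (U' : Set V), predSet E (succSet E U') = U' →
        ∀ u ∈ U', ∀ x, Relation.ReflTransGen R u x → x ∈ U' := by
      intro U' hU' u hu x hx
      induction hx with
      | refl => exact hu
      | tail _ hRsx ih =>
        rw [← hU', predSucc_eq]
        exact ⟨_, ih, hRsx⟩
    refine ⟨C, ⟨⟨v, hvC⟩, fix v hRvv, ?_⟩, hvC⟩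
    intro U' hsub ⟨u, hu⟩ hfix
    have huC : u ∈ C := hsub hu
    have hvu : Relation.ReflTransGen R u v := by
      have : Std.Symm R := ⟨fun a b h => hRsymm h⟩
      have := Relation.ReflTransGen.symmetric.symm _ _ huC
      exact this
    have hvU : v ∈ U' := comp_sub U' hfix u hu v hvu
    apply Set.Subset.antisymm hsub
    intro x hx
    exact comp_sub U' hfix v hvU x hx
end

section
/- In a finite digraph, the coresets (together with the empty set) partition the vertex set: they are pairwise disjoint and their union is V(D). -/
variable {V : Type*}

set_option linter.unusedSectionVars false

section aux
variable (E : V → V → Prop)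

lemma mem_f {u : V} {S : Set V} :
    u ∈ predSet E (succSet E S) ↔ ∃ z, (∃ w ∈ S, E w z) ∧ E u z := Iff.rfl

lemma has_edge_of_mem_f {u : V} {S : Set V} (h : u ∈ predSet E (succSet E S)) :
    ∃ z, E u z := by
  obtain ⟨z, _, hz⟩ := h; exact ⟨z, hz⟩

lemma subset_f {S : Set V} (h : ∀ u ∈ S, ∃ z, E u z) : S ⊆ predSet E (succSet E S) := by
  intro u hu
  obtain ⟨z, hz⟩ := h u hu
  exact ⟨z, ⟨u, hu, hz⟩, hz⟩

lemma f_mono {S T : Set V} (h : S ⊆ T) :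
    predSet E (succSet E S) ⊆ predSet E (succSet E T) := by
  rintro u ⟨z, ⟨w, hw, hwz⟩, huz⟩
  exact ⟨z, ⟨w, h hw, hwz⟩, huz⟩

/-- least fixed set of β∘α containing v -/
def cl (v : V) : Set V := ⋂₀ {U | predSet E (succSet E U) = U ∧ v ∈ U}

lemma topfix : predSet E (succSet E {u : V | ∃ z, E u z}) = {u | ∃ z, E u z} := by
  apply Set.Subset.antisymm
  · intro u hu; exact has_edge_of_mem_f E hu
  · exact subset_f E (fun u hu => hu)

variable {v : V} (hv : ∃ z, E v z)
include hv

lemma mem_cl_self : v ∈ cl E v := by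
  intro U hU; exact hU.2

lemma cl_subset_top : cl E v ⊆ {u | ∃ z, E u z} :=
  Set.sInter_subset_of_mem ⟨topfix E, hv⟩

lemma cl_least {U : Set V} (hfix : predSet E (succSet E U) = U) (hvU : v ∈ U) :
    cl E v ⊆ U :=
  Set.sInter_subset_of_mem ⟨hfix, hvU⟩

lemma cl_fixed : predSet E (succSet E (cl E v)) = cl E v := by
  apply Set.Subset.antisymm
  · intro u hu U hU
    exact hU.1 ▸ f_mono E (cl_least E hv hU.1 hU.2) hu
  · exact subset_f E (fun u hu => cl_subset_top E hv hu)

lemma cl_symm {x : V} (hx : x ∈ cl E v) : v ∈ cl E x := by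
  have hxe : ∃ z, E x z := cl_subset_top E hv hx
  by_contra hvx
  set D := cl E v \ cl E x with hD
  have hDfix : predSet E (succSet E D) = D := by
    apply Set.Subset.antisymm
    · rintro u ⟨z, ⟨w, hw, hwz⟩, huz⟩
      have hucl : u ∈ cl E v := by
        rw [← cl_fixed E hv]; exact ⟨z, ⟨w, hw.1, hwz⟩, huz⟩
      refine ⟨hucl, fun hux => hw.2 ?_⟩
      rw [← cl_fixed E hxe]
      exact ⟨z, ⟨u, hux, huz⟩, hwz⟩
    · exact subset_f E (fun u hu => cl_subset_top E hv hu.1)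
  have hvD : v ∈ D := ⟨mem_cl_self E hv, hvx⟩
  have : cl E v ⊆ D := cl_least E hv hDfix hvD
  exact (this hx).2 (mem_cl_self E hxe)

lemma cl_coreset : (cl E v).Nonempty ∧ predSet E (succSet E (cl E v)) = cl E v ∧
    ∀ U' ⊆ cl E v, U'.Nonempty → predSet E (succSet E U') = U' → U' = cl E v := by
  refine ⟨⟨v, mem_cl_self E hv⟩, cl_fixed E hv, ?_⟩
  intro U' hsub ⟨x, hx⟩ hfix
  have hxe : ∃ z, E x z := cl_subset_top E hv (hsub hx)
  have hvclx : v ∈ cl E x := cl_symm E hv (hsub hx)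
  have h1 : cl E x ⊆ U' := cl_least E hxe hfix hx
  have h2 : cl E v ⊆ U' := (cl_least E hv hfix (h1 hvclx))
  exact Set.Subset.antisymm hsub h2

end aux

/-- In a finite digraph, the coresets are pairwise disjoint and their union is the
whole vertex set. -/
theorem stmt4 {V : Type*} [Finite V] (E : V → V → Prop) :
    (∀ U W : Set V, IsCoresetGen E U → IsCoresetGen E W → U ≠ W → U ∩ W = ∅) ∧
    (∀ v : V, ∃ U, IsCoresetGen E U ∧ v ∈ U) := by
  constructor
  · intro U W hU hW hne
    rcases hU with hU | ⟨hUne, hUfix, hUmin⟩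
    · rcases hW with hW | ⟨hWne, hWfix, hWmin⟩
      · exact absurd (hU.trans hW.symm) hne
      · ext x
        simp only [Set.mem_inter_iff, Set.mem_empty_iff_false, iff_false, not_and]
        intro hxU hxW
        obtain ⟨z, hz⟩ := has_edge_of_mem_f E (hWfix ▸ hxW)
        exact (hU ▸ hxU) z hz
    · rcases hW with hW | ⟨hWne, hWfix, hWmin⟩
      · ext x
        simp only [Set.mem_inter_iff, Set.mem_empty_iff_false, iff_false, not_and]
        intro hxU hxW
        obtain ⟨z, hz⟩ := has_edge_of_mem_f E (hUfix ▸ hxU)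
        exact (hW ▸ hxW) z hz
      · by_contra h
        obtain ⟨x, hxU, hxW⟩ := Set.inter_nonempty.1 (Set.nonempty_iff_ne_empty.2 h)
        have hxe : ∃ z, E x z := has_edge_of_mem_f E (hUfix ▸ hxU)
        have h1 : cl E x = U :=
          hUmin _ (cl_least E hxe hUfix hxU) ⟨x, mem_cl_self E hxe⟩ (cl_fixed E hxe)
        have h2 : cl E x = W :=
          hWmin _ (cl_least E hxe hWfix hxW) ⟨x, mem_cl_self E hxe⟩ (cl_fixed E hxe)
        exact hne (h1 ▸ h2)
  · intro v
    by_cases hv : ∃ z, E v z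
    · exact ⟨cl E v, Or.inr (cl_coreset E hv), mem_cl_self E hv⟩
    · exact ⟨sinks E, Or.inl rfl, fun w hw => hv ⟨w, hw⟩⟩
end

section
/- Let U be a nontrivial coreset of a digraph D and let D' be the subdigraph with vertex set U ∪ α(U) and edge set consisting of all edges of D from U to α(U). Then the only nontrivial coreset of D' is U itself. -/
variable {V : Type*}

/-- If `U` is a nontrivial coreset of `D` and `D'` is the subdigraph on `U ∪ α(U)`
with edge set the edges of `D` from `U` to `α(U)`, then the only nontrivial coreset
of `D'` is `U` itself. -/
theorem stmt8 {V : Type*} (E : V → V → Prop) (U : Set V) (hU : IsCoreset E U) :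
    IsCoreset (fun a b => E a b ∧ a ∈ U ∧ b ∈ succSet E U) U ∧
    ∀ U' : Set V, IsCoreset (fun a b => E a b ∧ a ∈ U ∧ b ∈ succSet E U) U' → U' = U := by
  obtain ⟨hne, hfix, hmin⟩ := hU
  set E' : V → V → Prop := fun a b => E a b ∧ a ∈ U ∧ b ∈ succSet E U with hE'
  have hsucc : ∀ S : Set V, S ⊆ U → succSet E' S = succSet E S := by
    intro S hS
    ext v
    constructor
    · rintro ⟨u, hu, he, _, _⟩; exact ⟨u, hu, he⟩
    · rintro ⟨u, hu, he⟩; exact ⟨u, hu, he, hS hu, ⟨u, hS hu, he⟩⟩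
  have hpred : ∀ S : Set V, S ⊆ succSet E U → predSet E' S = predSet E S := by
    intro S hS
    ext u
    constructor
    · rintro ⟨v, hv, he, _, _⟩; exact ⟨v, hv, he⟩
    · rintro ⟨v, hv, he⟩
      have huU : u ∈ U := by rw [← hfix]; exact ⟨v, hS hv, he⟩
      exact ⟨v, hv, he, huU, hS hv⟩
  have hmono : ∀ S : Set V, S ⊆ U → succSet E S ⊆ succSet E U := by
    rintro S hS v ⟨u, hu, he⟩; exact ⟨u, hS hu, he⟩
  have key : ∀ U' : Set V, U' ⊆ U → U'.Nonempty →
      predSet E' (succSet E' U') = U' → U' = U := by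
    intro U' hsub hne' hfx'
    rw [hsucc U' hsub, hpred _ (hmono U' hsub)] at hfx'
    exact hmin U' hsub hne' hfx'
  have hcore : IsCoreset E' U := by
    refine ⟨hne, ?_, fun U' hsub hne' hfx' => key U' hsub hne' hfx'⟩
    rw [hsucc U subset_rfl, hpred _ (subset_rfl), hfix]
  refine ⟨hcore, ?_⟩
  rintro U' ⟨hne', hfx', _⟩
  have hsub : U' ⊆ U := by
    rw [← hfx']
    rintro u ⟨v, hv, he, huU, hvα⟩
    exact huU
  exact key U' hsub hne' hfx'
end

section
/- A nonempty vertex set U in a finite digraph is a nontrivial coreset if and only if: every vertex of U has a successor, the rows of the adjacency matrix corresponding to U are orthogonal (as 0-1 vectors over the integers) to all rows corresponding to vertices outside U, and no nonempty proper subset of U has both of these properties. -/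
variable {V : Type*}

open scoped Classical in
lemma sum_orth_iff {V : Type*} [Fintype V] (E : V → V → Prop) (A : V → V → ℤ)
    (hA : ∀ u v, A u v = if E u v then 1 else 0) (u x : V) :
    (∑ w, A u w * A x w = 0) ↔ ∀ w, ¬(E u w ∧ E x w) := by
  classical
  rw [Finset.sum_eq_zero_iff_of_nonneg]
  · constructor
    · intro h w ⟨h1, h2⟩
      have := h w (Finset.mem_univ w)
      simp [hA, h1, h2] at this
    · intro h w _
      rcases not_and_or.mp (h w) with h1 | h1 <;> simp [hA, h1]
  · intro w _
    rw [hA, hA]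
    split <;> split <;> norm_num

open scoped Classical in
lemma fixed_iff {V : Type*} [Fintype V] (E : V → V → Prop) (A : V → V → ℤ)
    (hA : ∀ u v, A u v = if E u v then 1 else 0) (S : Set V) :
    predSet E (succSet E S) = S ↔
      ((∀ u ∈ S, ∃ v, E u v) ∧ (∀ u ∈ S, ∀ x ∉ S, ∑ w, A u w * A x w = 0)) := by
  constructor
  · intro h
    constructor
    · intro u hu
      rw [← h] at hu
      obtain ⟨v, _, huv⟩ := hu
      exact ⟨v, huv⟩
    · intro u hu x hx
      rw [sum_orth_iff E A hA]
      rintro w ⟨h1, h2⟩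
      exact hx (h ▸ ⟨w, ⟨u, hu, h1⟩, h2⟩)
  · rintro ⟨h1, h2⟩
    apply Set.eq_of_subset_of_subset
    · rintro x ⟨v, ⟨u, hu, huv⟩, hxv⟩
      by_contra hx
      exact ((sum_orth_iff E A hA u x).mp (h2 u hu x hx)) v ⟨huv, hxv⟩
    · intro u hu
      obtain ⟨v, hv⟩ := h1 u hu
      exact ⟨v, ⟨u, hu, hv⟩, hv⟩

open scoped Classical in
/-- Adjacency-matrix characterization of nontrivial coresets: a nonempty `U` is a
nontrivial coreset iff its rows are nonzero (every vertex of `U` has a successor),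
orthogonal to all rows outside `U`, and no nonempty proper subset of `U` has both
properties. -/
theorem stmt9 {V : Type*} [Fintype V] (E : V → V → Prop) (A : V → V → ℤ)
    (hA : ∀ u v, A u v = if E u v then 1 else 0) (U : Set V) (hUne : U.Nonempty) :
    IsCoreset E U ↔
      ((∀ u ∈ U, ∃ v, E u v) ∧
       (∀ u ∈ U, ∀ x ∉ U, ∑ w, A u w * A x w = 0) ∧
       (∀ U' ⊆ U, U'.Nonempty → U' ≠ U →
         ¬ ((∀ u ∈ U', ∃ v, E u v) ∧ (∀ u ∈ U', ∀ x ∉ U', ∑ w, A u w * A x w = 0)))) := by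
  constructor
  · rintro ⟨-, hfix, hmin⟩
    obtain ⟨h1, h2⟩ := (fixed_iff E A hA U).mp hfix
    refine ⟨h1, h2, ?_⟩
    intro U' hsub hne hneq hprops
    exact hneq (hmin U' hsub hne ((fixed_iff E A hA U').mpr hprops))
  · rintro ⟨h1, h2, h3⟩
    refine ⟨hUne, (fixed_iff E A hA U).mpr ⟨h1, h2⟩, ?_⟩
    intro U' hsub hne hfix
    by_contra hneq
    exact h3 U' hsub hne hneq ((fixed_iff E A hA U').mp hfix)
end

section
/- If a finite digraph D admits partitions {Aᵢ} and {Bᵢ} of V(D) with E(D) = ⋃ᵢ (Aᵢ × Bᵢ), then D is a line digraph, i.e., there is a digraph D' (possibly with multiple edges) with L(D') ≅ D. -/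
variable {V : Type*}

/-- `E` is (the edge relation of) a line digraph: there is a digraph `D'`
(vertex type `V'`, edge index type `E'` with tail/head maps, so multiple edges are
allowed) whose line digraph is isomorphic to `(V, E)`. -/
def IsLineDigraph {V : Type*} (E : V → V → Prop) : Prop :=
  ∃ (V' E' : Type) (tail head : E' → V') (φ : V ≃ E'),
    ∀ u v, E u v ↔ head (φ u) = tail (φ v)

/-- If a finite digraph admits partitions `{Aᵢ}`, `{Bᵢ}` of its vertex set with
`E(D) = ⋃ᵢ Aᵢ × Bᵢ`, then it is a line digraph. -/
theorem stmt11 {V : Type*} [Fintype V] (E : V → V → Prop) {ι : Type*}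
    (A B : ι → Set V)
    (hA : ∀ i j, i ≠ j → A i ∩ A j = ∅)
    (hB : ∀ i j, i ≠ j → B i ∩ B j = ∅)
    (hAu : (⋃ i, A i) = Set.univ)
    (hBu : (⋃ i, B i) = Set.univ)
    (hE : ∀ u v, E u v ↔ ∃ i, u ∈ A i ∧ v ∈ B i) :
    IsLineDigraph E := by
  classical
  obtain ⟨e⟩ : Nonempty (V ≃ Fin (Fintype.card V)) := ⟨Fintype.equivFin V⟩
  have hAmem : ∀ v : V, ∃ i, v ∈ A i := by
    intro v
    have : v ∈ ⋃ i, A i := hAu.symm ▸ Set.mem_univ v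
    simpa using this
  have hBmem : ∀ v : V, ∃ i, v ∈ B i := by
    intro v
    have : v ∈ ⋃ i, B i := hBu.symm ▸ Set.mem_univ v
    simpa using this
  set a : V → ι := fun v => (hAmem v).choose with ha
  set b : V → ι := fun v => (hBmem v).choose with hb
  have haA : ∀ v, v ∈ A (a v) := fun v => (hAmem v).choose_spec
  have hbB : ∀ v, v ∈ B (b v) := fun v => (hBmem v).choose_spec
  have haU : ∀ v i, v ∈ A i → a v = i := by
    intro v i hv
    by_contra h
    have := hA (a v) i h
    exact absurd (Set.mem_inter (haA v) hv) (by simp [this])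
  have hbU : ∀ v i, v ∈ B i → b v = i := by
    intro v i hv
    by_contra h
    have := hB (b v) i h
    exact absurd (Set.mem_inter (hbB v) hv) (by simp [this])
  have hEab : ∀ u v, E u v ↔ a u = b v := by
    intro u v
    rw [hE]
    constructor
    · rintro ⟨i, hu, hv⟩
      rw [haU u i hu, hbU v i hv]
    · intro h
      exact ⟨b v, h ▸ haA u, hbB v⟩
  set S : ι → Set (Fin (Fintype.card V)) := fun i => {x | e.symm x ∈ A i} with hS
  have hSinj : ∀ i j, S i = S j → A i = A j := by
    intro i j h
    ext v
    have : e v ∈ S i ↔ e v ∈ S j := by rw [h]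
    simpa [hS] using this
  refine ⟨Option (Set (Fin (Fintype.card V))), Fin (Fintype.card V),
    (fun x => if (A (b (e.symm x))).Nonempty then some (S (b (e.symm x))) else none),
    (fun x => some (S (a (e.symm x)))), e, ?_⟩
  intro u v
  rw [hEab]
  simp only [e.symm_apply_apply]
  by_cases h : (A (b v)).Nonempty
  · simp only [if_pos h, Option.some.injEq]
    constructor
    · intro hab; rw [hab]
    · intro hSe
      by_contra hne
      have hAA := hSinj _ _ hSe
      have := hA (a u) (b v) hne
      obtain ⟨w, hw⟩ := h
      exact absurd (Set.mem_inter (hAA ▸ hw) hw) (by simp [this])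
  · simp only [if_neg h]
    constructor
    · intro hab
      exact absurd ⟨u, hab ▸ haA u⟩ h
    · simp
end

section
/- If a finite digraph D admits partitions {Aᵢ} and {Bᵢ} of V(D) with E(D) = ⋃ᵢ (Aᵢ × Bᵢ) (each Aᵢ nonempty), then each nonempty Aᵢ with corresponding nonempty Bᵢ is a nontrivial coreset of D, and any two vertices u, x in the same coreset satisfy α(u) = α(x). -/
variable {V : Type*}

/-- If a finite digraph admits partitions `{Aᵢ}`, `{Bᵢ}` with `E(D) = ⋃ᵢ Aᵢ × Bᵢ`,
then each nonempty `Aᵢ` with nonempty corresponding `Bᵢ` is a nontrivial coreset,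
and any two vertices in a common coreset have equal successor sets. -/
theorem stmt12 {V : Type*} [Fintype V] (E : V → V → Prop) {ι : Type*}
    (A B : ι → Set V)
    (hA : ∀ i j, i ≠ j → A i ∩ A j = ∅)
    (hB : ∀ i j, i ≠ j → B i ∩ B j = ∅)
    (hAu : (⋃ i, A i) = Set.univ)
    (hBu : (⋃ i, B i) = Set.univ)
    (hE : ∀ u v, E u v ↔ ∃ i, u ∈ A i ∧ v ∈ B i) :
    (∀ i, (A i).Nonempty → (B i).Nonempty → IsCoreset E (A i)) ∧
    (∀ U : Set V, IsCoresetGen E U →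
      ∀ u ∈ U, ∀ x ∈ U, succSet E {u} = succSet E {x}) := by
  have uniqA : ∀ u i j, u ∈ A i → u ∈ A j → i = j := by
    intro u i j hi hj
    by_contra h
    have := hA i j h
    exact absurd (Set.mem_inter hi hj) (by simp [this])
  have uniqB : ∀ v i j, v ∈ B i → v ∈ B j → i = j := by
    intro v i j hi hj
    by_contra h
    have := hB i j h
    exact absurd (Set.mem_inter hi hj) (by simp [this])
  have succ_sub : ∀ (U' : Set V) (i : ι), U'.Nonempty → U' ⊆ A i →
      succSet E U' = B i := by
    intro U' i hne hsub
    ext v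
    constructor
    · rintro ⟨w, hw, hEwv⟩
      obtain ⟨j, hwj, hvj⟩ := (hE w v).1 hEwv
      rwa [uniqA w i j (hsub hw) hwj]
    · intro hv
      obtain ⟨w, hw⟩ := hne
      exact ⟨w, hw, (hE w v).2 ⟨i, hsub hw, hv⟩⟩
  have pred_B : ∀ i : ι, (B i).Nonempty → predSet E (B i) = A i := by
    intro i hne
    ext u
    constructor
    · rintro ⟨v, hv, hEuv⟩
      obtain ⟨j, huj, hvj⟩ := (hE u v).1 hEuv
      rwa [uniqB v i j hv hvj]
    · intro hu
      obtain ⟨v, hv⟩ := hne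
      exact ⟨v, hv, (hE u v).2 ⟨i, hu, hv⟩⟩
  have coreA : ∀ i : ι, (A i).Nonempty → (B i).Nonempty → IsCoreset E (A i) := by
    intro i hAne hBne
    refine ⟨hAne, ?_, ?_⟩
    · rw [succ_sub (A i) i hAne subset_rfl, pred_B i hBne]
    · intro U' hsub hne hfix
      rw [succ_sub U' i hne hsub, pred_B i hBne] at hfix
      exact hfix.symm
  refine ⟨coreA, ?_⟩
  intro U hU u hu x hx
  rcases hU with rfl | ⟨hne, hfix, hmin⟩
  · have hs : ∀ y ∈ sinks E, succSet E {y} = (∅ : Set V) := by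
      intro y hy
      ext v
      simp only [succSet, Set.mem_setOf_eq, Set.mem_singleton_iff,
        Set.mem_empty_iff_false, iff_false]
      rintro ⟨w, rfl, hEwv⟩
      exact hy v hEwv
    rw [hs u hu, hs x hx]
  · have humem : u ∈ ⋃ i, A i := by rw [hAu]; exact Set.mem_univ u
    obtain ⟨i, hui⟩ := Set.mem_iUnion.1 humem
    have huP : u ∈ predSet E (succSet E U) := hfix.symm ▸ hu
    obtain ⟨v, hvS, hEuv⟩ := huP
    have hvB : v ∈ B i := by
      obtain ⟨j, huj, hvj⟩ := (hE u v).1 hEuv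
      rwa [uniqA u i j hui huj]
    have hAsub : A i ⊆ U := by
      intro a ha
      have : a ∈ predSet E (succSet E U) := ⟨v, hvS, (hE a v).2 ⟨i, ha, hvB⟩⟩
      rwa [hfix] at this
    have hAU : A i = U := hmin (A i) hAsub ⟨u, hui⟩ (by
      rw [succ_sub (A i) i ⟨u, hui⟩ subset_rfl, pred_B i ⟨v, hvB⟩])
    have hxA : x ∈ A i := hAU.symm ▸ hx
    rw [succ_sub {u} i ⟨u, rfl⟩ (Set.singleton_subset_iff.2 hui),
      succ_sub {x} i ⟨x, rfl⟩ (Set.singleton_subset_iff.2 hxA)]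
end

section
/- If a finite digraph D satisfies: for every edge (u,v), β(v) equals the coreset containing u, then for each nontrivial coreset U, the edge set from U to α(U) equals U × α(U), i.e., every vertex of U is a predecessor of every vertex of α(U). -/
variable {V : Type*}

/-- If for every edge `(u,v)` the set `β(v)` is the coreset containing `u`, then for
every nontrivial coreset `U` the edges from `U` to `α(U)` are all of `U × α(U)`. -/
theorem stmt14 {V : Type*} [Finite V] (E : V → V → Prop)
    (hD : ∀ u v : V, E u v → ∃ U : Set V, IsCoresetGen E U ∧ u ∈ U ∧ predSet E {v} = U) :
    ∀ U : Set V, IsCoreset E U → ∀ u ∈ U, ∀ v ∈ succSet E U, E u v := by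
  rintro U ⟨hne, hU, hmin⟩ u hu v ⟨u', hu', hE⟩
  obtain ⟨U₀, hgen, hu'0, hpred⟩ := hD u' v hE
  rcases hgen with rfl | ⟨hne0, hU0, hmin0⟩
  · exact absurd hE (hu'0 v)
  · -- W = U ∩ U₀ is a closed nonempty subset of U
    have hW : predSet E (succSet E (U ∩ U₀)) = U ∩ U₀ := by
      ext x
      constructor
      · rintro ⟨y, ⟨z, hz, hzy⟩, hxy⟩
        constructor
        · rw [← hU]; exact ⟨y, ⟨z, hz.1, hzy⟩, hxy⟩
        · rw [← hU0]; exact ⟨y, ⟨z, hz.2, hzy⟩, hxy⟩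
      · intro hx
        have hxv : E x v := by
          have := hx.2; rw [← hpred] at this
          obtain ⟨w, hw, hxw⟩ := this
          rwa [Set.mem_singleton_iff.mp hw] at hxw
        exact ⟨v, ⟨x, hx, hxv⟩, hxv⟩
    have : U ∩ U₀ = U := hmin _ (Set.inter_subset_left) ⟨u', hu', hu'0⟩ hW
    have huU0 : u ∈ U₀ := by rw [← this] at hu; exact hu.2
    rw [← hpred] at huU0
    obtain ⟨w, hw, hxw⟩ := huU0
    rwa [Set.mem_singleton_iff.mp hw] at hxw
end

section
/- A 0-1 matrix whose columns are pairwise identical or orthogonal and whose rows are pairwise identical or orthogonal is the adjacency matrix of a line digraph; conversely the adjacency matrix of a line digraph has any two rows identical or orthogonal and any two columns identical or orthogonal. -/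
variable {V : Type*}

/-- A 0-1 matrix is the adjacency matrix of a line digraph iff any two rows are
identical or orthogonal and any two columns are identical or orthogonal. -/
theorem stmt15 {V : Type*} [Fintype V] (A : V → V → ℤ)
    (h01 : ∀ u v, A u v = 0 ∨ A u v = 1) :
    ((∀ u v : V, (∀ w, A u w = A v w) ∨ ∑ w, A u w * A v w = 0) ∧
     (∀ u v : V, (∀ w, A w u = A w v) ∨ ∑ w, A w u * A w v = 0)) ↔
    IsLineDigraph (fun u v => A u v = 1) := by
  classical
  constructor
  · rintro ⟨hrow, _⟩
    -- key: two vertices with a common out-neighbor have identical rows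
    have key : ∀ u x v : V, A u v = 1 → A x v = 1 → ∀ w, A u w = A x w := by
      intro u x v hu hx w
      rcases hrow u x with h | h
      · exact h w
      · exfalso
        have hnn : ∀ w ∈ Finset.univ, (0:ℤ) ≤ A u w * A x w := by
          intro w _
          rcases h01 u w with h1 | h1 <;> rcases h01 x w with h2 | h2 <;>
            simp [h1, h2]
        have := (Finset.sum_eq_zero_iff_of_nonneg hnn).mp h v (Finset.mem_univ v)
        rw [hu, hx] at this
        norm_num at this
    set e := Fintype.equivFin V with he
    refine ⟨Set (Fin (Fintype.card V)) ⊕ Fin (Fintype.card V), Fin (Fintype.card V),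
      (fun i => if h : ∃ x, A x (e.symm i) = 1 then
        Sum.inl {j | ∃ x, A x (e.symm i) = 1 ∧ A x (e.symm j) = 1} else Sum.inr i),
      (fun i => Sum.inl {j | A (e.symm i) (e.symm j) = 1}), e, ?_⟩
    intro u v
    constructor
    · intro huv
      have hex : ∃ x, A x (e.symm (e v)) = 1 := ⟨u, by simpa using huv⟩
      simp only [hex, dif_pos]
      congr 1
      ext j
      simp only [Set.mem_setOf_eq, Equiv.symm_apply_apply]
      constructor
      · intro hj
        exact ⟨u, huv, hj⟩
      · rintro ⟨x, hxv, hxj⟩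
        rw [key u x v huv hxv]
        exact hxj
    · intro hhd
      by_cases hex : ∃ x, A x (e.symm (e v)) = 1
      · simp only [hex, dif_pos] at hhd
        have hsets := Sum.inl.inj hhd
        have : e v ∈ {j | A (e.symm (e u)) (e.symm j) = 1} := by
          rw [hsets]
          obtain ⟨x, hx⟩ := hex
          exact ⟨x, hx, hx⟩
        simpa using this
      · simp only [hex, dif_neg, not_false_iff] at hhd
        exact absurd hhd (by simp)
  · rintro ⟨V', E', tail, head, φ, hiso⟩
    have zero_or_one : ∀ u v : V, A u v ≠ 1 → A u v = 0 := by
      intro u v h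
      rcases h01 u v with h1 | h1
      · exact h1
      · exact absurd h1 h
    constructor
    · intro u v
      by_cases hc : ∃ w, A u w = 1 ∧ A v w = 1
      · left
        obtain ⟨w0, hu0, hv0⟩ := hc
        have h1 : head (φ u) = tail (φ w0) := (hiso u w0).mp hu0
        have h2 : head (φ v) = tail (φ w0) := (hiso v w0).mp hv0
        have heq : head (φ u) = head (φ v) := h1.trans h2.symm
        intro w
        have hiff : A u w = 1 ↔ A v w = 1 := by
          constructor
          · intro h; exact (hiso v w).mpr (heq ▸ (hiso u w).mp h)
          · intro h; exact (hiso u w).mpr (heq.symm ▸ (hiso v w).mp h)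
        rcases h01 u w with h3 | h3 <;> rcases h01 v w with h4 | h4
        · rw [h3, h4]
        · exfalso; rw [hiff.mpr h4] at h3; norm_num at h3
        · exfalso; rw [hiff.mp h3] at h4; norm_num at h4
        · rw [h3, h4]
      · right
        apply Finset.sum_eq_zero
        intro w _
        by_cases h3 : A u w = 1
        · have h4 : A v w = 0 := zero_or_one v w (fun h => hc ⟨w, h3, h⟩)
          rw [h4, mul_zero]
        · rw [zero_or_one u w h3, zero_mul]
    · intro u v
      by_cases hc : ∃ w, A w u = 1 ∧ A w v = 1
      · left
        obtain ⟨w0, hu0, hv0⟩ := hc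
        have h1 : head (φ w0) = tail (φ u) := (hiso w0 u).mp hu0
        have h2 : head (φ w0) = tail (φ v) := (hiso w0 v).mp hv0
        have heq : tail (φ u) = tail (φ v) := h1.symm.trans h2
        intro w
        have hiff : A w u = 1 ↔ A w v = 1 := by
          constructor
          · intro h; exact (hiso w v).mpr (heq ▸ (hiso w u).mp h)
          · intro h; exact (hiso w u).mpr (heq.symm ▸ (hiso w v).mp h)
        rcases h01 w u with h3 | h3 <;> rcases h01 w v with h4 | h4
        · rw [h3, h4]
        · exfalso; rw [hiff.mpr h4] at h3; norm_num at h3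
        · exfalso; rw [hiff.mp h3] at h4; norm_num at h4
        · rw [h3, h4]
      · right
        apply Finset.sum_eq_zero
        intro w _
        by_cases h3 : A w u = 1
        · have h4 : A w v = 0 := zero_or_one w v (fun h => hc ⟨w, h3, h⟩)
          rw [h4, mul_zero]
        · rw [zero_or_one w u h3, zero_mul]
end

section
/- For a digraph D without sources or sinks and n ≥ 1, the n-th order coresets of D (coresets of the digraph Dⁿ whose edges are pairs joined by a walk of length n in D) partition V(D), and vertices of distinct n-th order coresets have no common n-th order successor. -/
variable {V : Type*}

/-- There is a directed walk of length `n` from `u` to `v`. -/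
def walkRel {V : Type*} (E : V → V → Prop) (n : ℕ) (u v : V) : Prop :=
  ∃ f : Fin (n + 1) → V, f 0 = u ∧ f (Fin.last n) = v ∧
    ∀ i : Fin n, E (f i.castSucc) (f i.succ)


lemma walk_no_sink {V : Type*} (E : V → V → Prop) (h : ∀ v, ∃ w, E v w) (n : ℕ) (v : V) :
    ∃ w, walkRel E n v w := by
  classical
  set g : V → V := fun v => (h v).choose with hg
  refine ⟨g^[n] v, fun i => g^[(i : ℕ)] v, by simp, by simp [Fin.last], fun i => ?_⟩
  have : g^[(i : ℕ) + 1] v = g (g^[(i : ℕ)] v) := Function.iterate_succ_apply' g _ v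
  simp only [Fin.coe_castSucc, Fin.val_succ, this]
  exact (h _).choose_spec

lemma walk_no_source {V : Type*} (E : V → V → Prop) (h : ∀ v, ∃ u, E u v) (n : ℕ) (v : V) :
    ∃ u, walkRel E n u v := by
  classical
  set g : V → V := fun v => (h v).choose with hg
  have hge : ∀ x, E (g x) x := fun x => (h x).choose_spec
  refine ⟨g^[n] v, fun i => g^[n - (i : ℕ)] v, by simp, by simp [Fin.last], fun i => ?_⟩
  have hlt : (i : ℕ) < n := i.isLt
  have h1 : n - (i : ℕ) = (n - ((i : ℕ) + 1)) + 1 := by omega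
  simp only [Fin.coe_castSucc, Fin.val_succ, h1, Function.iterate_succ_apply' g]
  exact hge _

/-- For a finite digraph without sources or sinks, the `n`-th order coresets
(coresets of `Dⁿ`) partition the vertex set, and distinct `n`-th order coresets
have no common `n`-th order successor. -/
theorem stmt16 {V : Type*} [Finite V] (E : V → V → Prop)
    (hsink : ∀ v : V, ∃ w, E v w) (hsource : ∀ v : V, ∃ u, E u v)
    (n : ℕ) (hn : 1 ≤ n) :
    (∀ U W : Set V, IsCoreset (walkRel E n) U → IsCoreset (walkRel E n) W →
      U ≠ W → U ∩ W = ∅) ∧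
    (∀ v : V, ∃ U, IsCoreset (walkRel E n) U ∧ v ∈ U) ∧
    (∀ U W : Set V, IsCoreset (walkRel E n) U → IsCoreset (walkRel E n) W →
      U ≠ W → succSet (walkRel E n) U ∩ succSet (walkRel E n) W = ∅) := by
  classical
  set E' := walkRel E n with hE'
  have hsink' : ∀ v : V, ∃ w, E' v w := walk_no_sink E hsink n
  have hsource' : ∀ v : V, ∃ u, E' u v := walk_no_source E hsource n
  -- the common-successor relation
  set R : V → V → Prop := fun u w => ∃ x, E' u x ∧ E' w x with hR
  have hRrefl : ∀ v, R v v := fun v => by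
    obtain ⟨w, hw⟩ := hsink' v; exact ⟨w, hw, hw⟩
  have hRsymm : ∀ {u w}, R u w → R w u := fun ⟨x, h1, h2⟩ => ⟨x, h2, h1⟩
  -- characterization of the operator
  have hT : ∀ U : Set V, predSet E' (succSet E' U) = {u | ∃ w ∈ U, R w u} := by
    intro U
    ext u
    constructor
    · rintro ⟨x, ⟨w, hwU, hwx⟩, hux⟩
      exact ⟨w, hwU, x, hwx, hux⟩
    · rintro ⟨w, hwU, x, hwx, hux⟩
      exact ⟨x, ⟨w, hwU, hwx⟩, hux⟩
  -- disjointness of distinct coresets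
  have disj : ∀ U W : Set V, IsCoreset E' U → IsCoreset E' W → U ≠ W → U ∩ W = ∅ := by
    intro U W ⟨hUne, hUfix, hUmin⟩ ⟨hWne, hWfix, hWmin⟩ hUW
    by_contra h
    have hne : (U ∩ W).Nonempty := Set.nonempty_iff_ne_empty.mpr h
    have hfix : predSet E' (succSet E' (U ∩ W)) = U ∩ W := by
      apply Set.Subset.antisymm
      · rw [hT]
        rintro u ⟨w, ⟨hwU, hwW⟩, hRwu⟩
        constructor
        · rw [← hUfix, hT]; exact ⟨w, hwU, hRwu⟩
        · rw [← hWfix, hT]; exact ⟨w, hwW, hRwu⟩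
      · rw [hT]
        intro u hu
        exact ⟨u, hu, hRrefl u⟩
    have h1 : U ∩ W = U := hUmin _ Set.inter_subset_left hne hfix
    have h2 : U ∩ W = W := hWmin _ Set.inter_subset_right hne hfix
    exact hUW (h1 ▸ h2)
  refine ⟨disj, ?_, ?_⟩
  · -- every vertex lies in a coreset: its R-connected component
    intro v
    set C : Set V := {w | Relation.ReflTransGen R v w} with hC
    have hvC : v ∈ C := Relation.ReflTransGen.refl
    have hCfix : predSet E' (succSet E' C) = C := by
      rw [hT]
      apply Set.Subset.antisymm
      · rintro u ⟨w, hwC, hRwu⟩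
        exact Relation.ReflTransGen.tail hwC hRwu
      · intro u hu
        exact ⟨u, hu, hRrefl u⟩
    refine ⟨C, ⟨⟨v, hvC⟩, hCfix, ?_⟩, hvC⟩
    intro U' hU'sub ⟨w, hw⟩ hU'fix
    apply Set.Subset.antisymm hU'sub
    intro u hu
    have hwu : Relation.ReflTransGen R w u := by
      have hsym : Symmetric R := fun _ _ h => hRsymm h
      exact Relation.ReflTransGen.trans
        (haveI : Std.Symm R := ⟨fun _ _ h => hsym h⟩; (Relation.ReflTransGen.stdSymm (r := R)).symm _ _ (hU'sub hw)) hu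
    -- walk along the R-path staying inside U'
    clear hu
    induction hwu with
    | refl => exact hw
    | tail _ hab ih =>
        rw [← hU'fix, hT]
        exact ⟨_, ih, hab⟩
  · -- distinct coresets have disjoint successor sets
    intro U W hU hW hUW
    by_contra h
    obtain ⟨x, ⟨u1, hu1, hu1x⟩, ⟨u2, hu2, hu2x⟩⟩ := Set.nonempty_iff_ne_empty.mpr h
    obtain ⟨u, hux⟩ := hsource' x
    have huU : u ∈ U := by
      rw [← hU.2.1, hT]; exact ⟨u1, hu1, x, hu1x, hux⟩
    have huW : u ∈ W := by
      rw [← hW.2.1, hT]; exact ⟨u2, hu2, x, hu2x, hux⟩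
    have := disj U W hU hW hUW
    exact absurd (this ▸ (Set.mem_inter huU huW)) (Set.notMem_empty u)
end

section
/- Let D be a finite digraph without sources or sinks. A set U ⊆ V(D) is an n-th order coreset of D if and only if the set W of edges of D with head in U is an (n+1)-th order coreset of the line digraph L(D). -/
variable {V : Type*}

section Aux

variable {α : Type*}

lemma walkRel_zero_iff (E : α → α → Prop) {u v : α} : walkRel E 0 u v ↔ u = v := by
  constructor
  · rintro ⟨f, h0, hl, _⟩
    have h01 : Fin.last 0 = 0 := by decide
    rw [h01] at hl
    rw [← h0, ← hl]
  · rintro rfl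
    exact ⟨fun _ => u, rfl, rfl, fun i => i.elim0⟩

lemma walkRel_succ_iff (E : α → α → Prop) (n : ℕ) {u v : α} :
    walkRel E (n + 1) u v ↔ ∃ w, E u w ∧ walkRel E n w v := by
  constructor
  · rintro ⟨f, h0, hl, hE⟩
    refine ⟨f 1, ?_, fun i => f i.succ, ?_, ?_, ?_⟩
    · have h := hE 0
      rwa [Fin.castSucc_zero, h0, Fin.succ_zero_eq_one] at h
    · simp [Fin.succ_zero_eq_one]
    · show f (Fin.last n).succ = v
      rw [Fin.succ_last]; exact hl
    · intro i
      show E (f i.castSucc.succ) (f i.succ.succ)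
      have h := hE i.succ
      rwa [← Fin.succ_castSucc] at h
  · rintro ⟨w, huw, g, h0, hl, hE⟩
    refine ⟨Fin.cases u g, by simp, ?_, ?_⟩
    · show Fin.cases u g (Fin.last n).succ = v
      rw [Fin.cases_succ]; exact hl
    · intro i
      induction i using Fin.cases with
      | zero =>
        show E (Fin.cases u g (Fin.castSucc 0)) (Fin.cases u g (Fin.succ 0))
        rw [Fin.castSucc_zero, Fin.cases_zero, Fin.cases_succ, h0]
        exact huw
      | succ j =>
        show E (Fin.cases u g j.succ.castSucc) (Fin.cases u g j.succ.succ)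
        rw [← Fin.succ_castSucc, Fin.cases_succ, Fin.cases_succ]
        exact hE j

lemma lineWalk_iff (E : α → α → Prop) (n : ℕ) (e f : {p : α × α // E p.1 p.2}) :
    walkRel (fun a b : {p : α × α // E p.1 p.2} => a.val.2 = b.val.1) (n + 1) e f ↔
      walkRel E n e.val.2 f.val.1 := by
  induction n generalizing e f with
  | zero =>
    rw [walkRel_succ_iff, walkRel_zero_iff]
    constructor
    · rintro ⟨g, hg, hw⟩
      rw [walkRel_zero_iff] at hw
      rw [hw] at hg; exact hg
    · intro h; exact ⟨f, h, (walkRel_zero_iff _).2 rfl⟩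
  | succ m ih =>
    rw [walkRel_succ_iff, walkRel_succ_iff]
    constructor
    · rintro ⟨g, hg, hw⟩
      rw [ih] at hw
      exact ⟨g.val.2, hg ▸ g.prop, hw⟩
    · rintro ⟨w, hw, hwalk⟩
      exact ⟨⟨(e.val.2, w), hw⟩, rfl, (ih _ _).2 hwalk⟩

/-- Edges with head in `S`. -/
def edgeLift (E : α → α → Prop) (S : Set α) : Set {p : α × α // E p.1 p.2} :=
  {e | e.val.2 ∈ S}

/-- Heads of edges in `T`. -/
def edgeHeads (E : α → α → Prop) (T : Set {p : α × α // E p.1 p.2}) : Set α :=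
  {v | ∃ e ∈ T, e.val.2 = v}

lemma edgeHeads_edgeLift (E : α → α → Prop) (hsource : ∀ v : α, ∃ u, E u v) (S : Set α) :
    edgeHeads E (edgeLift E S) = S := by
  ext v
  constructor
  · rintro ⟨e, he, rfl⟩; exact he
  · intro hv
    obtain ⟨u, hu⟩ := hsource v
    exact ⟨⟨(u, v), hu⟩, hv, rfl⟩

end Aux

/-- For a finite digraph `D` without sources or sinks: `U` is an `n`-th order
coreset of `D` iff the set `W` of edges of `D` with head in `U` is an
`(n+1)`-th order coreset of the line digraph `L(D)`. -/
theorem stmt17 {V : Type*} [Finite V] (E : V → V → Prop)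
    (hsink : ∀ v : V, ∃ w, E v w) (hsource : ∀ v : V, ∃ u, E u v)
    (n : ℕ) (hn : 1 ≤ n) (U : Set V) :
    IsCoreset (walkRel E n) U ↔
      IsCoreset
        (walkRel (fun e f : {p : V × V // E p.1 p.2} => e.val.2 = f.val.1) (n + 1))
        {e : {p : V × V // E p.1 p.2} | e.val.2 ∈ U} := by
  set G := walkRel (fun e f : {p : V × V // E p.1 p.2} => e.val.2 = f.val.1) (n + 1) with hG
  set F := walkRel E n with hF
  have key : ∀ e f : {p : V × V // E p.1 p.2}, G e f ↔ F e.val.2 f.val.1 :=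
    fun e f => lineWalk_iff E n e f
  -- the key structural identity for the coreset operator on the line digraph
  have hgamma : ∀ T : Set {p : V × V // E p.1 p.2},
      predSet G (succSet G T) = edgeLift E (predSet F (succSet F (edgeHeads E T))) := by
    intro T
    ext e
    simp only [predSet, succSet, edgeLift, edgeHeads, Set.mem_setOf_eq]
    constructor
    · rintro ⟨f, ⟨u, hu, hGuf⟩, hGef⟩
      exact ⟨f.val.1, ⟨u.val.2, ⟨u, hu, rfl⟩, (key u f).1 hGuf⟩, (key e f).1 hGef⟩
    · rintro ⟨v, ⟨u, ⟨e', he', rfl⟩, hFuv⟩, hFev⟩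
      obtain ⟨w, hw⟩ := hsink v
      exact ⟨⟨(v, w), hw⟩, ⟨e', he', (key e' _).2 hFuv⟩, (key e _).2 hFev⟩
  have hHL : ∀ S : Set V, edgeHeads E (edgeLift E S) = S := edgeHeads_edgeLift E hsource
  have hlift_ne : ∀ S : Set V, S.Nonempty → (edgeLift E S).Nonempty := by
    rintro S ⟨v, hv⟩
    obtain ⟨u, hu⟩ := hsource v
    exact ⟨⟨(u, v), hu⟩, hv⟩
  constructor
  · rintro ⟨hUne, hUfix, hUmin⟩
    refine ⟨hlift_ne U hUne, ?_, ?_⟩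
    · show predSet G (succSet G (edgeLift E U)) = edgeLift E U
      rw [hgamma, hHL, hUfix]
    · intro T' hT'sub hT'ne hT'fix
      have hS'fix : predSet F (succSet F (edgeHeads E T')) = edgeHeads E T' := by
        conv_rhs => rw [← hT'fix]
        rw [hgamma, hHL]
      have hS'sub : edgeHeads E T' ⊆ U := by
        rintro v ⟨e, he, rfl⟩; exact hT'sub he
      have hS'ne : (edgeHeads E T').Nonempty := by
        obtain ⟨e, he⟩ := hT'ne
        exact ⟨e.val.2, e, he, rfl⟩
      have hEq := hUmin (edgeHeads E T') hS'sub hS'ne hS'fix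
      calc T' = edgeLift E (predSet F (succSet F (edgeHeads E T'))) := by
              rw [← hgamma, hT'fix]
        _ = {e : {p : V × V // E p.1 p.2} | e.val.2 ∈ U} := by rw [hS'fix, hEq]; rfl
  · rintro ⟨hWne, hWfix, hWmin⟩
    have hWfix' : edgeLift E (predSet F (succSet F U)) = edgeLift E U := by
      have h0 : predSet G (succSet G (edgeLift E U)) = edgeLift E U := hWfix
      rw [hgamma, hHL] at h0
      exact h0
    have hUfix : predSet F (succSet F U) = U := by
      have h := congrArg (edgeHeads E) hWfix'
      rwa [hHL, hHL] at h
    refine ⟨?_, hUfix, ?_⟩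
    · obtain ⟨e, he⟩ := hWne
      exact ⟨e.val.2, he⟩
    · intro U' hsub hne hfix
      have h1 : edgeLift E U' ⊆ edgeLift E U := fun e he => hsub he
      have h3 : predSet G (succSet G (edgeLift E U')) = edgeLift E U' := by
        rw [hgamma, hHL, hfix]
      have h4 := hWmin (edgeLift E U') h1 (hlift_ne U' hne) h3
      have h := congrArg (edgeHeads E) h4
      rwa [hHL, show edgeHeads E {e : {p : V × V // E p.1 p.2} | e.val.2 ∈ U} = U from hHL U] at h
end

section
/- For a finite digraph D, the coreset digraph Y(D) satisfies Y(D) ≅ D (with each coreset a singleton, i.e., Y(D) = D up to the canonical map) if and only if D has at most one sink and every vertex of D has at most one predecessor. -/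
variable {V : Type*}

/-- Membership in `predSet E (succSet E S)` means sharing a common successor
with an element of `S`. -/
lemma mem_predSucc {E : V → V → Prop} {S : Set V} {x : V} :
    x ∈ predSet E (succSet E S) ↔ ∃ a ∈ S, ∃ w, E a w ∧ E x w := by
  constructor
  · rintro ⟨w, ⟨a, ha, haw⟩, hxw⟩
    exact ⟨a, ha, w, haw, hxw⟩
  · rintro ⟨a, ha, w, haw, hxw⟩
    exact ⟨w, ⟨a, ha, haw⟩, hxw⟩

/-- The coreset digraph `Y(D)` equals `D` (i.e. every nonempty coreset is a single
vertex) iff `D` has at most one sink and every vertex has at most one predecessor. -/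
theorem stmt18 {V : Type*} [Finite V] (E : V → V → Prop) :
    (∀ U : Set V, IsCoresetGen E U → U.Nonempty → ∃ v, U = {v}) ↔
    ((sinks E).Subsingleton ∧ ∀ v : V, {u | E u v}.Subsingleton) := by
  constructor
  · intro h
    constructor
    · intro a ha b hb
      obtain ⟨w, hw⟩ := h (sinks E) (Or.inl rfl) ⟨a, ha⟩
      rw [hw] at ha hb
      rw [Set.mem_singleton_iff] at ha hb
      rw [ha, hb]
    · intro v u₁ h₁ u₂ h₂
      simp only [Set.mem_setOf_eq] at h₁ h₂
      -- `R a b`: a and b share a common successor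
      set R : V → V → Prop := fun a b => ∃ w, E a w ∧ E b w with hRdef
      have hRsymm : Symmetric R := fun a b ⟨w, ha, hb⟩ => ⟨w, hb, ha⟩
      -- the R-component of u₁
      set C : Set V := {b | Relation.ReflTransGen R u₁ b} with hCdef
      have hu1C : u₁ ∈ C := Relation.ReflTransGen.refl
      have hu2C : u₂ ∈ C := Relation.ReflTransGen.single ⟨v, h₁, h₂⟩
      -- every element of C has a successor
      have hCnosink : ∀ x ∈ C, ∃ w, E x w := by
        intro x hx
        induction hx with
        | refl => exact ⟨v, h₁⟩
        | tail _ hr _ =>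
          obtain ⟨w, _, hxw⟩ := hr
          exact ⟨w, hxw⟩
      -- C is fixed by β∘α
      have hfix : predSet E (succSet E C) = C := by
        ext x
        rw [mem_predSucc]
        constructor
        · rintro ⟨a, ha, w, haw, hxw⟩
          exact Relation.ReflTransGen.tail ha ⟨w, haw, hxw⟩
        · intro hx
          obtain ⟨w, hxw⟩ := hCnosink x hx
          exact ⟨x, hx, w, hxw, hxw⟩
      -- C is a coreset
      have hcore : IsCoreset E C := by
        refine ⟨⟨u₁, hu1C⟩, hfix, ?_⟩
        intro U' hsub ⟨a, haU'⟩ hfix'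
        -- U' is closed under R-paths
        have hclosed : ∀ {x y : V}, x ∈ U' → Relation.ReflTransGen R x y → y ∈ U' := by
          intro x y hx hxy
          induction hxy with
          | refl => exact hx
          | tail _ hr ih =>
            rename_i b c _
            obtain ⟨w, hbw, hcw⟩ := hr
            rw [← hfix', mem_predSucc]
            exact ⟨b, ih, w, hbw, hcw⟩
        apply Set.Subset.antisymm hsub
        intro b hb
        have hau : Relation.ReflTransGen R u₁ a := hsub haU'
        have hab : Relation.ReflTransGen R a b :=
          Relation.ReflTransGen.trans (by haveI : Std.Symm R := ⟨fun x y h => hRsymm h⟩; exact Std.Symm.symm _ _ hau) hb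
        exact hclosed haU' hab
      obtain ⟨w, hw⟩ := h C (Or.inr hcore) ⟨u₁, hu1C⟩
      rw [hw, Set.mem_singleton_iff] at hu1C hu2C
      rw [hu1C, hu2C]
  · rintro ⟨hs, hp⟩ U hU ⟨u, hu⟩
    cases hU with
    | inl h =>
      subst h
      exact ⟨u, hs.eq_singleton_of_mem hu⟩
    | inr h =>
      obtain ⟨-, hfix, hmin⟩ := h
      -- u has a successor
      have hu' : u ∈ predSet E (succSet E U) := hfix.symm ▸ hu
      obtain ⟨v', -, huv'⟩ := hu'
      -- {u} is fixed
      have hfixu : predSet E (succSet E {u}) = {u} := by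
        ext x
        rw [mem_predSucc]
        constructor
        · rintro ⟨a, ha, w, haw, hxw⟩
          rw [Set.mem_singleton_iff] at ha
          subst ha
          exact hp w hxw haw
        · intro hx
          rw [Set.mem_singleton_iff] at hx
          subst hx
          exact ⟨x, rfl, v', huv', huv'⟩
      exact ⟨u, (hmin {u} (Set.singleton_subset_iff.mpr hu) ⟨u, rfl⟩ hfixu).symm⟩
end
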